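/- In the stage game get-close-to-the-target, for any fixed pair of actions a₁, a₂ ∈ {1,…,n} and any fixed outcome o ∈ {player 1 wins, player 2 wins, draw}, the set of targets { k ∈ {1,…,n} : the round with actions a₁, a₂ and target k has outcome o } is an interval of integers (i.e., it is order-connected: if it contains k and k′ then it contains every integer between them). -/

import Mathlib

/-- Possible outcomes of a round of a zero-sum stage game. -/
inductive Outcome
  | P1Wins
  | P2Wins
  | Draw
deriving DecidableEq

/-- The outcome of a round of *get-close-to-the-target* with actions `a₁` (player 1),
`a₂` (player 2) and hidden target `k`: if `|aᵢ - k| < |a₋ᵢ - k|` then player `i` wins;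
if `a₁ = a₂ = a ≠ k` then player 1 wins if `a < k` and player 2 wins if `a > k`;
otherwise the round is a draw. -/
def outcome (a₁ a₂ k : ℤ) : Outcome :=
  if |a₁ - k| < |a₂ - k| then .P1Wins
  else if |a₂ - k| < |a₁ - k| then .P2Wins
  else if a₁ = a₂ ∧ a₁ ≠ k then (if a₁ < k then .P1Wins else .P2Wins)
  else .Draw

/-!
A target below the midpoint `(a₁ + a₂) / 2` is won by the player with the smaller action, one
above it by the other player; the tie-break rule for `a₁ = a₂` agrees with this, player 2 counting
as the smaller. So if `k ≤ k' ≤ k''` and `k, k''` have the same outcome, `k'` lies on the same side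
of the midpoint as `k` or `k''`, or is one of them: otherwise `k` and `k''` would lie on opposite
sides and have different winners.
-/

lemma outcome_of_two_mul_lt {a₁ a₂ k : ℤ} (h : 2 * k < a₁ + a₂) :
    outcome a₁ a₂ k = if a₁ < a₂ then .P1Wins else .P2Wins := by
  unfold outcome
  rcases abs_cases (a₁ - k) with ⟨h₁, _⟩ | ⟨h₁, _⟩ <;>
    rcases abs_cases (a₂ - k) with ⟨h₂, _⟩ | ⟨h₂, _⟩ <;>
    rw [h₁, h₂] <;> split_ifs <;> first | rfl | omega

lemma outcome_of_lt_two_mul {a₁ a₂ k : ℤ} (h : a₁ + a₂ < 2 * k) :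
    outcome a₁ a₂ k = if a₁ < a₂ then .P2Wins else .P1Wins := by
  unfold outcome
  rcases abs_cases (a₁ - k) with ⟨h₁, _⟩ | ⟨h₁, _⟩ <;>
    rcases abs_cases (a₂ - k) with ⟨h₂, _⟩ | ⟨h₂, _⟩ <;>
    rw [h₁, h₂] <;> split_ifs <;> first | rfl | omega

lemma ordConnected_setOf_outcome_eq (a₁ a₂ : ℤ) (o : Outcome) :
    Set.OrdConnected {k | outcome a₁ a₂ k = o} := by
  refine ⟨fun k (hk : _ = o) k'' (hk'' : _ = o) k' ⟨hkk', hk'k''⟩ => ?_⟩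
  show outcome a₁ a₂ k' = o
  rcases lt_trichotomy (2 * k') (a₁ + a₂) with h | h | h
  · rw [← hk, outcome_of_two_mul_lt h, outcome_of_two_mul_lt (by omega)]
  · obtain rfl | hkk' := hkk'.eq_or_lt
    · exact hk
    obtain rfl | hk'k'' := hk'k''.eq_or_lt
    · exact hk''
    rw [outcome_of_two_mul_lt (by omega)] at hk
    rw [outcome_of_lt_two_mul (by omega), ← hk] at hk''
    split_ifs at hk''
  · rw [← hk'', outcome_of_lt_two_mul h, outcome_of_lt_two_mul (by omega)]

theorem stmt2_general (n a₁ a₂ : ℤ) (o : Outcome) :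
    ∀ k k' k'' : ℤ,
      (k ∈ Finset.Icc 1 n ∧ outcome a₁ a₂ k = o) →
      (k'' ∈ Finset.Icc 1 n ∧ outcome a₁ a₂ k'' = o) →
      k ≤ k' → k' ≤ k'' →
      (k' ∈ Finset.Icc 1 n ∧ outcome a₁ a₂ k' = o) := by
  intro k k' k'' hk hk'' hkk' hk'k''
  have hconn :=
    (Set.ordConnected_Icc (a := 1) (b := n)).inter (ordConnected_setOf_outcome_eq a₁ a₂ o)
  simpa using hconn.out (by simpa using hk) (by simpa using hk'') ⟨hkk', hk'k''⟩

/-- In the stage game get-close-to-the-target, for any fixed pair of actions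
`a₁, a₂ ∈ {1,…,n}` and any fixed outcome `o`, the set of targets
`{ k ∈ {1,…,n} : outcome a₁ a₂ k = o }` is an interval of integers: if it contains
`k` and `k''` then it contains every integer `k'` between them. -/
theorem stmt2 (n a₁ a₂ : ℤ) (hn : 1 ≤ n)
    (ha₁ : a₁ ∈ Finset.Icc 1 n) (ha₂ : a₂ ∈ Finset.Icc 1 n) (o : Outcome) :
    ∀ k k' k'' : ℤ,
      (k ∈ Finset.Icc 1 n ∧ outcome a₁ a₂ k = o) →
      (k'' ∈ Finset.Icc 1 n ∧ outcome a₁ a₂ k'' = o) →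
      k ≤ k' → k' ≤ k'' →
      (k' ∈ Finset.Icc 1 n ∧ outcome a₁ a₂ k' = o) :=
  stmt2_general n a₁ a₂ o
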